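/- If X = (X₁,…,X_k) is generated by a stationary ergodic process ρ_X and ρ is a known process measure, then the one-sample empirical distance d̂(X,ρ) = Σᵢ wᵢ|ν(X,Bᵢ) − ρ(Bᵢ)| converges almost surely to d(ρ_X, ρ) as k → ∞. -/

import Mathlib

/-!
For a cylinder `B`, the sliding-window frequency `nu k X B.dim B.set` is, once `k ≥ B.dim`, a
Birkhoff average of `𝟙_B` along the shift, so the pointwise ergodic theorem gives
`nu → ρ_X(B)` almost surely; countably many cylinders can be handled simultaneously, and as the
`i`-th term of `dhat1` is bounded by `2 wᵢ`, dominated convergence for series passes to the limit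
in the sum.

The pointwise ergodic theorem is proved for bounded observables from Garsia's maximal ergodic
inequality.
-/

open MeasureTheory Filter Topology

/-- Empirical sliding-window frequency of the (cylinder) set `S` of dimension `l`
in the sample given by the first `n` values of `X`. -/
noncomputable def nu (n : ℕ) (X : ℕ → ℝ) (l : ℕ) (S : Set (ℕ → ℝ)) : ℝ :=
  if l ≤ n ∧ 1 ≤ l then
    (∑ i ∈ Finset.range (n - l + 1),
      S.indicator (fun _ => (1 : ℝ)) (fun j => X (i + j))) / (n - l + 1)
  else 0

/-- A finite-dimensional cylinder with rational endpoints. -/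
structure Cylinder where
  dim : ℕ
  dimPos : 0 < dim
  a : Fin dim → ℚ
  b : Fin dim → ℚ

/-- The subset of `ℕ → ℝ` determined by a cylinder (it constrains the first `dim`
coordinates to lie in the corresponding rational-endpoint intervals). -/
def Cylinder.set (C : Cylinder) : Set (ℕ → ℝ) :=
  {x | ∀ j : Fin C.dim, (C.a j : ℝ) ≤ x j.val ∧ x j.val ≤ (C.b j : ℝ)}

/-- Distributional distance between two process measures. -/
noncomputable def dd (w : ℕ → ℝ) (B : ℕ → Cylinder) (μ ν : Measure (ℕ → ℝ)) : ℝ :=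
  ∑' i, w i * |(μ (B i).set).toReal - (ν (B i).set).toReal|

/-- Empirical distributional distance between two finite samples. -/
noncomputable def dhat (w : ℕ → ℝ) (B : ℕ → Cylinder)
    (n : ℕ) (X : ℕ → ℝ) (m : ℕ) (Y : ℕ → ℝ) : ℝ :=
  ∑' i, w i * |nu n X (B i).dim (B i).set - nu m Y (B i).dim (B i).set|

/-- One-sample empirical distributional distance to a known process measure. -/
noncomputable def dhat1 (w : ℕ → ℝ) (B : ℕ → Cylinder)
    (n : ℕ) (X : ℕ → ℝ) (ρ : Measure (ℕ → ℝ)) : ℝ :=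
  ∑' i, w i * |nu n X (B i).dim (B i).set - (ρ (B i).set).toReal|

/-- The left shift on `ℕ → ℝ`. -/
def shift : (ℕ → ℝ) → (ℕ → ℝ) := fun x n => x (n + 1)

/-- Concatenation of a word of length `k` with another word. -/
def conc (k : ℕ) (x y : ℕ → ℝ) : ℕ → ℝ := fun i => if i < k then x i else y (i - k)

section MaximalErgodic

variable {α : Type*} {T : α → α} {g : α → ℝ}

/-- Garsia's recursion: `birkhoffMax T g N x = max_{k ≤ N} birkhoffSum T g k x`. -/
noncomputable def birkhoffMax (T : α → α) (g : α → ℝ) : ℕ → α → ℝ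
  | 0 => 0
  | N + 1 => fun x => max 0 (g x + birkhoffMax T g N (T x))

theorem birkhoffMax_succ (N : ℕ) (x : α) :
    birkhoffMax T g (N + 1) x = max 0 (g x + birkhoffMax T g N (T x)) :=
  rfl

theorem birkhoffMax_nonneg (N : ℕ) (x : α) : 0 ≤ birkhoffMax T g N x := by
  cases N with
  | zero => exact le_rfl
  | succ N => exact le_max_left _ _

theorem birkhoffMax_le_succ (N : ℕ) (x : α) : birkhoffMax T g N x ≤ birkhoffMax T g (N + 1) x := by
  induction N generalizing x with
  | zero => exact birkhoffMax_nonneg 1 x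
  | succ N ih =>
    rw [birkhoffMax_succ, birkhoffMax_succ]
    gcongr
    exact ih (T x)

theorem birkhoffMax_succ_of_pos {N : ℕ} {x : α} (h : 0 < birkhoffMax T g (N + 1) x) :
    birkhoffMax T g (N + 1) x = g x + birkhoffMax T g N (T x) := by
  rw [birkhoffMax_succ] at h ⊢
  exact max_eq_right ((lt_max_iff.1 h).resolve_left (lt_irrefl 0)).le

theorem monotone_birkhoffMax : Monotone (birkhoffMax T g) :=
  monotone_nat_of_le_succ fun N x => birkhoffMax_le_succ N x

theorem birkhoffSum_le_birkhoffMax (n : ℕ) (x : α) : birkhoffSum T g n x ≤ birkhoffMax T g n x := by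
  induction n generalizing x with
  | zero => simp [birkhoffMax]
  | succ n ih =>
    rw [birkhoffSum_succ', birkhoffMax_succ]
    exact le_max_of_le_right (by linarith [ih (T x)])

variable [MeasurableSpace α] {μ : Measure α}

theorem measurable_birkhoffMax (hT : Measurable T) (hg : Measurable g) (N : ℕ) :
    Measurable (birkhoffMax T g N) := by
  induction N with
  | zero => exact measurable_const
  | succ N ih => exact measurable_const.max (hg.add (ih.comp hT))

theorem integrable_birkhoffMax (hT : MeasurePreserving T μ μ) (hgm : Measurable g)
    (hg : Integrable g μ) (N : ℕ) : Integrable (birkhoffMax T g N) μ := by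
  induction N with
  | zero => exact integrable_zero α ℝ μ
  | succ N ih =>
    have hcomp : Integrable (birkhoffMax T g N ∘ T) μ :=
      (hT.integrable_comp (measurable_birkhoffMax hT.measurable hgm N).aestronglyMeasurable).2 ih
    refine (hg.add hcomp).pos_part.congr (Eventually.of_forall fun x => ?_)
    simp [birkhoffMax_succ, max_comm]

/-- On `{0 < birkhoffMax T g (N + 1)}` the recursion reads `g = M_{N+1} - M_N ∘ T`, while off it
`M_{N+1} - M_N ∘ T ≤ 0`; since `∫ M_N ∘ T = ∫ M_N ≤ ∫ M_{N+1}`, the integral of `g` over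
that set is nonnegative. -/
theorem setIntegral_birkhoffMax_pos_nonneg (hT : MeasurePreserving T μ μ) (hgm : Measurable g)
    (hg : Integrable g μ) (N : ℕ) :
    0 ≤ ∫ x in {x | 0 < birkhoffMax T g (N + 1) x}, g x ∂μ := by
  set M := birkhoffMax T g
  set E := {x | 0 < M (N + 1) x}
  have hE : MeasurableSet E :=
    measurableSet_lt measurable_const (measurable_birkhoffMax hT.measurable hgm (N + 1))
  have hM : ∀ K, Integrable (M K) μ := integrable_birkhoffMax hT hgm hg
  have hMT : Integrable (fun x => M N (T x)) μ :=
    (hT.integrable_comp (measurable_birkhoffMax hT.measurable hgm N).aestronglyMeasurable).2 (hM N)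
  have hD : Integrable (fun x => M (N + 1) x - M N (T x)) μ := (hM (N + 1)).sub hMT
  have h_total : 0 ≤ ∫ x, (M (N + 1) x - M N (T x)) ∂μ := by
    rw [integral_sub (hM (N + 1)) hMT, ← integral_map hT.aemeasurable
      (measurable_birkhoffMax hT.measurable hgm N).aestronglyMeasurable, hT.map_eq, sub_nonneg]
    exact integral_mono (hM N) (hM (N + 1)) (birkhoffMax_le_succ N)
  have h_off : ∫ x in Eᶜ, (M (N + 1) x - M N (T x)) ∂μ ≤ 0 :=
    setIntegral_nonpos hE.compl fun x hx => by
      linarith [not_lt.1 (show ¬ 0 < M (N + 1) x from hx),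
        birkhoffMax_nonneg (T := T) (g := g) N (T x)]
  have h_on : ∫ x in E, g x ∂μ = ∫ x in E, (M (N + 1) x - M N (T x)) ∂μ := by
    refine setIntegral_congr_fun hE fun x hx => ?_
    linarith [birkhoffMax_succ_of_pos (show 0 < M (N + 1) x from hx)]
  linarith [integral_add_compl hE hD]

theorem integral_nonneg_of_ae_exists_birkhoffSum_pos (hT : MeasurePreserving T μ μ)
    (hgm : Measurable g) (hg : Integrable g μ) (h : ∀ᵐ x ∂μ, ∃ n, 0 < birkhoffSum T g n x) :
    0 ≤ ∫ x, g x ∂μ := by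
  set E : ℕ → Set α := fun N => {x | 0 < birkhoffMax T g (N + 1) x}
  have hE : ∀ N, MeasurableSet (E N) := fun N =>
    measurableSet_lt measurable_const (measurable_birkhoffMax hT.measurable hgm (N + 1))
  have hE_mono : Monotone E := fun M N hMN x (hx : 0 < _) =>
    hx.trans_le (monotone_birkhoffMax (Nat.succ_le_succ hMN) x)
  have hE_univ : ⋃ N, E N =ᵐ[μ] (Set.univ : Set α) := by
    refine ae_eq_univ.2 (mem_ae_iff.1 ?_)
    filter_upwards [h] with x ⟨n, hn⟩
    exact Set.mem_iUnion.2 ⟨n, hn.trans_le <| (birkhoffSum_le_birkhoffMax n x).trans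
      (birkhoffMax_le_succ n x)⟩
  have := tendsto_setIntegral_of_monotone hE hE_mono hg.integrableOn
  rw [setIntegral_congr_set hE_univ, setIntegral_univ] at this
  exact ge_of_tendsto this (.of_forall (setIntegral_birkhoffMax_pos_nonneg hT hgm hg))

end MaximalErgodic

theorem Real.limsup_add_of_right_tendsto_zero {ι : Type*} {l : Filter ι} [l.NeBot] {u v : ι → ℝ}
    (hu_le : IsBoundedUnder (· ≤ ·) l u) (hu_ge : IsBoundedUnder (· ≥ ·) l u)
    (hv : Tendsto v l (𝓝 0)) :
    limsup (u + v) l = limsup u l := by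
  have hv_le := hv.isBoundedUnder_le
  have hv_ge := hv.isBoundedUnder_ge
  refine le_antisymm ?_ ?_
  · simpa [hv.limsup_eq] using limsup_add_le hu_ge hu_le hv_ge.isCoboundedUnder_le hv_le
  · simpa [hv.liminf_eq] using le_limsup_add hu_le hu_ge.isCoboundedUnder_le hv_le hv_ge

section BirkhoffAverage

variable {α : Type*} {T : α → α} {f : α → ℝ} {C : ℝ}

theorem abs_birkhoffAverage_le (hC : ∀ x, |f x| ≤ C) (n : ℕ) (x : α) :
    |birkhoffAverage ℝ T f n x| ≤ C := by
  have hC0 : 0 ≤ C := (abs_nonneg _).trans (hC x)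
  rcases Nat.eq_zero_or_pos n with rfl | hn
  · simpa using hC0
  rw [birkhoffAverage, birkhoffSum, smul_eq_mul, abs_mul, abs_inv, Nat.abs_cast,
    inv_mul_le_iff₀ (by exact_mod_cast hn)]
  calc |∑ k ∈ Finset.range n, f (T^[k] x)| ≤ ∑ k ∈ Finset.range n, |f (T^[k] x)| :=
        Finset.abs_sum_le_sum_abs _ _
    _ ≤ n * C := (Finset.sum_le_sum fun k _ => hC (T^[k] x)).trans_eq (by simp)

theorem isBoundedUnder_le_birkhoffAverage (hC : ∀ x, |f x| ≤ C) (x : α) :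
    IsBoundedUnder (· ≤ ·) atTop (fun n => birkhoffAverage ℝ T f n x) :=
  isBoundedUnder_of ⟨C, fun n => (abs_le.1 (abs_birkhoffAverage_le hC n x)).2⟩

theorem isBoundedUnder_ge_birkhoffAverage (hC : ∀ x, |f x| ≤ C) (x : α) :
    IsBoundedUnder (· ≥ ·) atTop (fun n => birkhoffAverage ℝ T f n x) :=
  isBoundedUnder_of ⟨-C, fun n => (abs_le.1 (abs_birkhoffAverage_le hC n x)).1⟩

theorem birkhoffSum_pos_of_birkhoffAverage_pos {n : ℕ} {x : α}
    (h : 0 < birkhoffAverage ℝ T f n x) : 0 < birkhoffSum T f n x := by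
  rw [birkhoffAverage, smul_eq_mul] at h
  exact pos_of_mul_pos_right h (inv_nonneg.2 n.cast_nonneg)

theorem limsup_birkhoffAverage_apply_eq_limsup (hC : ∀ x, |f x| ≤ C) (x : α) :
    limsup (fun n => birkhoffAverage ℝ T f n (T x)) atTop =
      limsup (fun n => birkhoffAverage ℝ T f n x) atTop := by
  have hf : Bornology.IsBounded (Set.range f) :=
    (Metric.isBounded_iff_subset_closedBall 0).2
      ⟨C, Set.range_subset_iff.2 fun y => by simpa using hC y⟩
  rw [← Real.limsup_add_of_right_tendsto_zero (isBoundedUnder_le_birkhoffAverage hC x)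
    (isBoundedUnder_ge_birkhoffAverage hC x)
    (tendsto_birkhoffAverage_apply_sub_birkhoffAverage' ℝ hf T x)]
  congr 1
  ext n
  simp

variable [MeasurableSpace α]

theorem measurable_birkhoffAverage (hT : Measurable T) (hf : Measurable f) (n : ℕ) :
    Measurable (birkhoffAverage ℝ T f n) := by
  unfold birkhoffAverage birkhoffSum
  fun_prop

variable {μ : Measure α} [IsProbabilityMeasure μ]

/-- The limsup of the averages is `T`-invariant, hence a.e. equal to a constant `c`; for `ε > 0`
the averages of `f - (c - ε)` are frequently positive, so the maximal ergodic theorem gives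
`c - ε ≤ ∫ f`. -/
theorem ae_limsup_birkhoffAverage_le_integral (hT : Ergodic T μ) (hf : Measurable f)
    (hC : ∀ x, |f x| ≤ C) :
    ∀ᵐ x ∂μ, limsup (fun n => birkhoffAverage ℝ T f n x) atTop ≤ ∫ x, f x ∂μ := by
  set φ := fun x => limsup (fun n => birkhoffAverage ℝ T f n x) atTop
  have hφ : Measurable φ := Measurable.limsup (measurable_birkhoffAverage hT.measurable hf)
  obtain ⟨c, hc⟩ := hT.toPreErgodic.ae_eq_const_of_ae_eq_comp hφ
    (funext fun x => limsup_birkhoffAverage_apply_eq_limsup hC x)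
  suffices c ≤ ∫ x, f x ∂μ from hc.mono fun x hx => hx.trans_le this
  refine le_of_forall_sub_le fun ε hε => ?_
  have hint : Integrable f μ := .of_bound hf.aestronglyMeasurable C (.of_forall hC)
  have := integral_nonneg_of_ae_exists_birkhoffSum_pos hT.toMeasurePreserving
    (hf.sub measurable_const) (hint.sub (integrable_const (c - ε))) ?_
  · simpa [integral_sub hint (integrable_const _)] using this
  filter_upwards [hc] with x hx
  have hfreq : ∃ᶠ n in atTop, c - ε < birkhoffAverage ℝ T f n x :=
    frequently_lt_of_lt_limsup (isBoundedUnder_ge_birkhoffAverage hC x).isCoboundedUnder_le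
      (show c - ε < φ x by rw [hx]; exact sub_lt_self c hε)
  obtain ⟨n, hn, hn1⟩ := (hfreq.and_eventually (eventually_ge_atTop 1)).exists
  refine ⟨n, birkhoffSum_pos_of_birkhoffAverage_pos ?_⟩
  rw [birkhoffAverage_sub, Pi.sub_apply, Pi.sub_apply,
    birkhoffAverage_of_comp_eq ℝ (g := fun _ => c - ε) rfl (by positivity)]
  linarith

theorem ae_tendsto_birkhoffAverage (hT : Ergodic T μ) (hf : Measurable f) (hC : ∀ x, |f x| ≤ C) :
    ∀ᵐ x ∂μ, Tendsto (fun n => birkhoffAverage ℝ T f n x) atTop (𝓝 (∫ x, f x ∂μ)) := by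
  have hC' : ∀ x, |(-f) x| ≤ C := by simpa using hC
  filter_upwards [ae_limsup_birkhoffAverage_le_integral hT hf hC,
    ae_limsup_birkhoffAverage_le_integral hT hf.neg hC'] with x hx hx'
  refine tendsto_order.2 ⟨fun a ha => ?_, fun a ha =>
    eventually_lt_of_limsup_lt (hx.trans_lt ha) (isBoundedUnder_le_birkhoffAverage hC x)⟩
  have hlt : ∫ x, (-f) x ∂μ < -a := by simpa [integral_neg] using ha
  filter_upwards [eventually_lt_of_limsup_lt (hx'.trans_lt hlt)
    (isBoundedUnder_le_birkhoffAverage hC' x)] with n hn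
  simpa [birkhoffAverage_neg] using hn

end BirkhoffAverage

theorem Cylinder.measurableSet_set (C : Cylinder) : MeasurableSet C.set := by
  simp only [Cylinder.set, Set.ofPred_forall]
  exact .iInter fun j => (measurableSet_le measurable_const (measurable_pi_apply _)).inter
    (measurableSet_le (measurable_pi_apply _) measurable_const)

theorem shift_iterate (i : ℕ) (x : ℕ → ℝ) : shift^[i] x = fun j => x (i + j) := by
  induction i generalizing x with
  | zero => simp
  | succ i ih =>
    ext j
    rw [Function.iterate_succ_apply, ih]
    simp only [shift, Nat.add_right_comm i 1 j, Nat.add_assoc]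

theorem nu_eq_birkhoffAverage {n l : ℕ} (h : l ≤ n ∧ 1 ≤ l) (X : ℕ → ℝ) (S : Set (ℕ → ℝ)) :
    nu n X l S = birkhoffAverage ℝ shift (S.indicator 1) (n - l + 1) X := by
  rw [nu, if_pos h, birkhoffAverage, birkhoffSum, smul_eq_mul, div_eq_inv_mul]
  simp only [shift_iterate, Nat.cast_add, Nat.cast_sub h.1, Nat.cast_one]
  rfl

theorem abs_indicator_one_le_one {α : Type*} (S : Set α) (x : α) :
    |S.indicator (1 : α → ℝ) x| ≤ 1 := by
  by_cases hx : x ∈ S <;> simp [hx]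

theorem abs_nu_le_one (n : ℕ) (X : ℕ → ℝ) (l : ℕ) (S : Set (ℕ → ℝ)) : |nu n X l S| ≤ 1 := by
  by_cases h : l ≤ n ∧ 1 ≤ l
  · rw [nu_eq_birkhoffAverage h]
    exact abs_birkhoffAverage_le (abs_indicator_one_le_one S) _ _
  · simp [nu, h]

theorem ae_tendsto_nu_cylinder {μ : Measure (ℕ → ℝ)} [IsProbabilityMeasure μ]
    (hμ : Ergodic shift μ) (C : Cylinder) :
    ∀ᵐ x ∂μ, Tendsto (fun n => nu n x C.dim C.set) atTop (𝓝 (μ C.set).toReal) := by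
  have hS := C.measurableSet_set
  filter_upwards [ae_tendsto_birkhoffAverage hμ (measurable_one.indicator hS)
    (abs_indicator_one_le_one C.set)] with x hx
  rw [integral_indicator_one hS] at hx
  refine (hx.comp ((tendsto_add_atTop_nat 1).comp (tendsto_sub_atTop_nat C.dim))).congr' ?_
  filter_upwards [eventually_ge_atTop C.dim] with n hn
  exact (nu_eq_birkhoffAverage ⟨hn, C.dimPos⟩ x C.set).symm

/-- The one-sample empirical distributional distance to a known process measure
converges almost surely to the distributional distance. -/
theorem stmt6 (w : ℕ → ℝ) (hw : ∀ i, 0 < w i) (hsum : Summable w)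
    (B : ℕ → Cylinder) (μX ρ : Measure (ℕ → ℝ))
    [IsProbabilityMeasure μX] [IsProbabilityMeasure ρ]
    (hX : Ergodic shift μX) :
    ∀ᵐ x ∂μX, Tendsto (fun k => dhat1 w B k x ρ) atTop (𝓝 (dd w B μX ρ)) := by
  filter_upwards [ae_all_iff.2 fun i => ae_tendsto_nu_cylinder hX (B i)] with x hx
  refine tendsto_tsum_of_dominated_convergence (bound := fun i => 2 * w i) (hsum.mul_left 2)
    (fun i => ((hx i).sub_const _).abs.const_mul (w i)) (.of_forall fun n i => ?_)
  have hρ : |(ρ (B i).set).toReal| ≤ 1 := by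
    rw [abs_of_nonneg ENNReal.toReal_nonneg]
    exact measureReal_le_one
  rw [norm_mul, Real.norm_of_nonneg (hw i).le, Real.norm_eq_abs, abs_abs, mul_comm 2]
  refine mul_le_mul_of_nonneg_left ?_ (hw i).le
  linarith [abs_sub (nu n x (B i).dim (B i).set) (ρ (B i).set).toReal,
    abs_nu_le_one n x (B i).dim (B i).set]
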